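/- With h := √(α² + 2σ²), define A(t,T) := ( 2h e^{(α+h)(T−t)/2} / (2h + (α+h)(e^{h(T−t)} − 1)) )^{2αβ/σ²} and B(t,T) as the standard CIR function. Then A solves ∂_t A(t,T) = αβ B(t,T) A(t,T) with A(T,T) = 1. -/

import Mathlib

/-- CIR Riccati function B(t,T) with h = √(α² + 2σ²). -/
noncomputable def Bcir (α σ T t : ℝ) : ℝ :=
  let h := Real.sqrt (α ^ 2 + 2 * σ ^ 2)
  2 * (Real.exp (h * (T - t)) - 1) / (2 * h + (α + h) * (Real.exp (h * (T - t)) - 1))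

/-- CIR function A(t,T) with h = √(α² + 2σ²). -/
noncomputable def Acir (α β σ T t : ℝ) : ℝ :=
  let h := Real.sqrt (α ^ 2 + 2 * σ ^ 2)
  (2 * h * Real.exp ((α + h) * (T - t) / 2)
      / (2 * h + (α + h) * (Real.exp (h * (T - t)) - 1))) ^ (2 * α * β / σ ^ 2 : ℝ)

/-!
`Acir` is a power `f ^ p` of the ratio `f = N / D`, so `∂ₜA = p (∂ₜ log f) A`. The numerator
contributes `∂ₜ log N = -(α + h)/2`, the denominator `-∂ₜ log D = (α + h) h e^{h(T-t)} / D`, and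
their sum collapses to `(h² - α²)(e^{h(T-t)} - 1) / (2D) = σ² (e^{h(T-t)} - 1) / D`
because `h² - α² = 2σ²`. Multiplying by `p = 2αβ/σ²` gives `αβ B`.
-/

open Real

theorem HasDerivAt.rpow_const_of_eq_mul {f : ℝ → ℝ} {g x p : ℝ} (hf : HasDerivAt f (f x * g) x)
    (hfx : 0 < f x) : HasDerivAt (fun y => f y ^ p) (p * g * f x ^ p) x := by
  convert hf.rpow_const (p := p) (Or.inl hfx.ne') using 1
  rw [rpow_sub hfx, rpow_one]
  field_simp

theorem abs_lt_sqrt_sq_add_two_mul_sq {a s : ℝ} (hs : s ≠ 0) : |a| < √(a ^ 2 + 2 * s ^ 2) :=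
  lt_sqrt_of_sq_lt (by rw [sq_abs, lt_add_iff_pos_right]; positivity)

namespace CIR

variable (a h T : ℝ)

noncomputable def denom (t : ℝ) : ℝ := 2 * h + (a + h) * (exp (h * (T - t)) - 1)

noncomputable def ratio (t : ℝ) : ℝ := 2 * h * exp ((a + h) * (T - t) / 2) / denom a h T t

variable {a h}

theorem denom_pos (hah : |a| < h) (t : ℝ) : 0 < denom a h T t := by
  obtain ⟨hlo, hhi⟩ := abs_lt.1 hah
  have hD : denom a h T t = (h - a) + (h + a) * exp (h * (T - t)) := by unfold denom; ring
  rw [hD]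
  exact add_pos_of_pos_of_nonneg (by linarith) (mul_nonneg (by linarith) (exp_pos _).le)

theorem ratio_pos (hah : |a| < h) (t : ℝ) : 0 < ratio a h T t := by
  have := (abs_nonneg a).trans_lt hah
  unfold ratio
  have := denom_pos T hah t
  positivity

theorem ratio_self (h0 : h ≠ 0) : ratio a h T T = 1 := by
  simp [ratio, denom, h0]

theorem hasDerivAt_ratio {t : ℝ} (hD : denom a h T t ≠ 0) :
    HasDerivAt (ratio a h T)
      (ratio a h T t * ((h ^ 2 - a ^ 2) * (exp (h * (T - t)) - 1) / (2 * denom a h T t))) t := by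
  have hτ : HasDerivAt (fun t : ℝ => T - t) (-1) t := by
    simpa using (hasDerivAt_id t).const_sub T
  have hN := (((hτ.const_mul (a + h)).div_const 2).exp).const_mul (2 * h)
  have hD' := ((((hτ.const_mul h).exp).sub_const 1).const_mul (a + h)).const_add (2 * h)
  refine (hN.div hD' hD).congr_deriv ?_
  simp only [ratio, denom] at hD ⊢
  field_simp
  ring

end CIR

theorem stmt6_general (α β σ T : ℝ) (hσ : 0 < σ) :
    (∀ t ∈ Set.Icc (0 : ℝ) T,
        HasDerivAt (Acir α β σ T) (α * β * Bcir α σ T t * Acir α β σ T t) t)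
      ∧ Acir α β σ T T = 1 := by
  set h := √(α ^ 2 + 2 * σ ^ 2)
  have hαh : |α| < h := abs_lt_sqrt_sq_add_two_mul_sq hσ.ne'
  have hσ_sq : h ^ 2 - α ^ 2 = 2 * σ ^ 2 := by
    rw [sq_sqrt (by positivity)]; ring
  refine ⟨fun t _ => ?_, ?_⟩
  · have hD := CIR.denom_pos T hαh t
    refine ((CIR.hasDerivAt_ratio T hD.ne').rpow_const_of_eq_mul (p := 2 * α * β / σ ^ 2)
      (CIR.ratio_pos T hαh t)).congr_deriv ?_
    change _ = α * β * (2 * (exp (h * (T - t)) - 1) / CIR.denom α h T t) * CIR.ratio α h T t ^ _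
    rw [hσ_sq]
    field_simp
  · change CIR.ratio α h T T ^ _ = 1
    rw [CIR.ratio_self T ((abs_nonneg α).trans_lt hαh).ne', one_rpow]

/-- A solves ∂_t A(t,T) = αβ B(t,T) A(t,T) with A(T,T) = 1. -/
theorem stmt6 (α β σ T : ℝ) (hα : 0 < α) (hβ : 0 < β) (hσ : 0 < σ)
    (hFeller : 2 * α * β > σ ^ 2) (hT : 0 < T) :
    (∀ t ∈ Set.Icc (0 : ℝ) T,
        HasDerivAt (Acir α β σ T) (α * β * Bcir α σ T t * Acir α β σ T t) t)
      ∧ Acir α β σ T T = 1 :=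
  stmt6_general α β σ T hσ
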